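/- arXiv:math/0311271 — 5 statements merged into one kernel-verified Lean document; each statement's English description precedes it below -/
import Mathlib

section
/- Let n ≥ 1. A chain ∅ ⊊ S_1 ⊊ S_2 ⊊ ⋯ ⊊ S_j ⊊ {1,…,n} of subsets of {1,…,n} is the descent chain of some permutation π ∈ S_n (i.e., equals the chain {π({1,…,k}) : k ∈ Des(π)} restricted to the given ranks, with Des(π) ⊇ {|S_1|,…,|S_j|}) if and only if for every 1 ≤ i ≤ j, max(S_i ∖ S_{i-1}) > min(S_{i+1} ∖ S_i), where S_0 = ∅ and S_{j+1} = {1,…,n}. -/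
/-- The chain `L` of subsets of `{1,…,n}` (encoded as `Finset (Fin n)`) with the
sentinels `S₀ = ∅` and `S_{j+1} = univ` adjoined. -/
def withSent (n : ℕ) (L : List (Finset (Fin n))) : List (Finset (Fin n)) :=
  (∅ :: L) ++ [Finset.univ]

/-- `L` is a face of the h-complex `Δₙ` of the truncated Boolean algebra: a strictly
increasing chain of proper nonempty subsets such that, with sentinels adjoined,
every consecutive pair of blocks has `max (S_i \ S_{i-1}) > min (S_{i+1} \ S_i)`
(expressed as: some element of the lower difference exceeds some element of the
upper difference, which is equivalent since max ≥ a and min ≤ c). -/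
def IsFace (n : ℕ) (L : List (Finset (Fin n))) : Prop :=
  (withSent n L).Chain' (· ⊂ ·) ∧
  ∀ i, ∀ h : i + 2 < (withSent n L).length,
    ∃ a ∈ (withSent n L).get ⟨i + 1, by omega⟩ \ (withSent n L).get ⟨i, by omega⟩,
      ∃ c ∈ (withSent n L).get ⟨i + 2, h⟩ \ (withSent n L).get ⟨i + 1, by omega⟩, c < a

/-- The descent set of `π ∈ Sₙ` in one-line notation, as a set of 1-indexed ranks:
`k ∈ Des π` iff `1 ≤ k ≤ n-1` and the letter in position `k` exceeds the one in
position `k+1` (positions are 0-indexed internally). -/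
def Des {n : ℕ} (π : Equiv.Perm (Fin n)) : Set ℕ :=
  {k | ∃ h : k < n, 0 < k ∧ π ⟨k, h⟩ < π ⟨k - 1, Nat.lt_of_le_of_lt (Nat.sub_le k 1) h⟩}

/-- The number of descents of `π`. -/
noncomputable def des {n : ℕ} (π : Equiv.Perm (Fin n)) : ℕ := (Des π).ncard

/-- `π({1,…,k})`: the image of the first `k` positions under `π`. -/
def firstK {n : ℕ} (π : Equiv.Perm (Fin n)) (k : ℕ) : Finset (Fin n) :=
  (Finset.univ.filter fun i : Fin n => (i : ℕ) < k).image π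

/-! If `π` has a descent at `|B|` and `A ⊂ B ⊂ D` are initial segments of `π`, then the
`|B|`-th letter of `π` lies in `B \ A` and exceeds the next letter, which lies in `D \ B`.
Conversely, writing the blocks `Sᵢ \ Sᵢ₋₁` one after another, each in increasing order, gives
a permutation whose initial segments of length `|Sᵢ|` are the `Sᵢ`; at position `|Sᵢ|` it
passes from `max (Sᵢ \ Sᵢ₋₁)` to `min (Sᵢ₊₁ \ Sᵢ)`, so the face condition is exactly a
descent there. -/

namespace List

variable {α : Type*}

theorem forall_getElem_three_iff {p : α → α → α → Prop} {l : List α} :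
    (∀ i (h : i + 2 < l.length), p l[i] l[i + 1] l[i + 2]) ↔
      ∀ l₁ a b c l₂, l = l₁ ++ a :: b :: c :: l₂ → p a b c := by
  constructor
  · rintro h l₁ a b c l₂ rfl
    simpa [List.getElem_append_right] using h l₁.length (by simp)
  · intro h i hi
    apply h (l.take i) _ _ _ (l.drop (i + 3))
    rw [← List.drop_eq_getElem_cons, ← List.drop_eq_getElem_cons, ← List.drop_eq_getElem_cons,
      List.take_append_drop]

end List

section Permutation

variable {n : ℕ}

theorem apply_mem_firstK_iff (π : Equiv.Perm (Fin n)) (j : Fin n) (k : ℕ) :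
    π j ∈ firstK π k ↔ (j : ℕ) < k := by
  simp [firstK]

theorem firstK_zero (π : Equiv.Perm (Fin n)) : firstK π 0 = ∅ := by
  simp [firstK]

theorem firstK_self (π : Equiv.Perm (Fin n)) : firstK π n = Finset.univ :=
  Finset.eq_univ_of_forall fun x =>
    π.apply_symm_apply x ▸ (apply_mem_firstK_iff π _ n).mpr (π.symm x).isLt

theorem exists_lt_of_mem_Des {π : Equiv.Perm (Fin n)} {a b d : ℕ} (hab : a < b) (hbd : b < d)
    (hb : b ∈ Des π) :
    ∃ x ∈ firstK π b \ firstK π a, ∃ y ∈ firstK π d \ firstK π b, y < x := by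
  obtain ⟨hbn, hb₀, hdes⟩ := hb
  refine ⟨_, ?_, _, ?_, hdes⟩ <;>
    simp only [Finset.mem_sdiff, apply_mem_firstK_iff] <;> omega

noncomputable def permOfWord (w : List (Fin n)) (hw : w.Nodup) (hlen : w.length = n) :
    Equiv.Perm (Fin n) :=
  Equiv.ofBijective (fun i => w[i]) <| Finite.injective_iff_bijective.mp fun i j hij =>
    Fin.ext <| by simpa using hw.getElem_inj_iff.mp hij

theorem permOfWord_apply (w : List (Fin n)) (hw : w.Nodup) (hlen : w.length = n) (i : Fin n) :
    permOfWord w hw hlen i = w[(i : ℕ)]'(hlen.symm ▸ i.isLt) := rfl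

theorem firstK_permOfWord (w : List (Fin n)) (hw : w.Nodup) (hlen : w.length = n) (k : ℕ) :
    firstK (permOfWord w hw hlen) k = (w.take k).toFinset := by
  ext x
  simp only [firstK, Finset.mem_image, Finset.mem_filter, Finset.mem_univ, true_and,
    permOfWord_apply, List.mem_toFinset, List.mem_take_iff_getElem]
  constructor
  · rintro ⟨i, hi, rfl⟩
    exact ⟨i, by omega, rfl⟩
  · rintro ⟨i, hi, rfl⟩
    exact ⟨⟨i, by omega⟩, (lt_min_iff.mp hi).1, rfl⟩

end Permutation

theorem subset_getLast_of_isChain {α : Type*} {A : Finset α} {l : List (Finset α)}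
    (h : (A :: l).IsChain (· ⊆ ·)) : A ⊆ (A :: l).getLast (List.cons_ne_nil A l) := by
  rcases List.mem_cons.mp (List.getLast_mem (List.cons_ne_nil A l)) with hA | hl
  · exact hA.symm ▸ subset_rfl
  · exact (List.pairwise_cons.mp (List.isChain_iff_pairwise.mp h)).1 _ hl

section BlockWord

variable {α : Type*} [LinearOrder α] {W P R : List (Finset α)} {A S D : Finset α}

def blockWord : List (Finset α) → List α
  | A :: B :: l => (B \ A).sort ++ blockWord (B :: l)
  | _ => []

theorem blockWord_append_cons (l₁ : List (Finset α)) (B : Finset α) (l₂ : List (Finset α)) :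
    blockWord (l₁ ++ B :: l₂) = blockWord (l₁ ++ [B]) ++ blockWord (B :: l₂) := by
  induction l₁ with
  | nil => simp [blockWord]
  | cons A l₁ ih =>
    cases l₁ with
    | nil => simp [blockWord]
    | cons A' l₁ => simpa [blockWord] using ih

theorem coe_blockWord {l : List (Finset α)} (h : (A :: l).IsChain (· ⊆ ·)) :
    (blockWord (A :: l) : Multiset α) = ((A :: l).getLast (List.cons_ne_nil A l) \ A).val := by
  induction l generalizing A with
  | nil => simp [blockWord]
  | cons B l ih =>
    obtain ⟨hAB, hB⟩ := List.isChain_cons_cons.mp h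
    have hdisj : Disjoint (B \ A) ((B :: l).getLast (List.cons_ne_nil B l) \ B) :=
      disjoint_sdiff_self_right.mono_left Finset.sdiff_subset
    rw [blockWord, ← Multiset.coe_add, ih hB, Finset.sort_eq, List.getLast_cons_cons,
      ← Finset.disjUnion_val _ _ hdisj, Finset.disjUnion_eq_union,
      Finset.union_comm, Finset.sdiff_union_sdiff_cancel (subset_getLast_of_isChain hB) hAB]

theorem coe_blockWord_of_eq_append (hW : W = P ++ S :: R) (h : W.IsChain (· ⊆ ·))
    (h₀ : W.head? = some ∅) : (blockWord (P ++ [S]) : Multiset α) = S.val := by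
  subst hW
  cases P with
  | nil => simp_all [blockWord]
  | cons A P =>
    obtain rfl : A = ∅ := by simpa using h₀
    have hchain : (∅ :: (P ++ [S])).IsChain (· ⊆ ·) :=
      (List.isChain_append.mp (by simpa using h)).1
    simpa using coe_blockWord hchain

theorem coe_blockWord_of_getLast? (h : W.IsChain (· ⊆ ·)) (h₀ : W.head? = some ∅)
    (h₁ : W.getLast? = some S) : (blockWord W : Multiset α) = S.val := by
  obtain ⟨P, rfl⟩ := List.getLast?_eq_some_iff.mp h₁
  exact coe_blockWord_of_eq_append rfl h h₀

theorem nodup_blockWord (h : W.IsChain (· ⊆ ·)) (h₀ : W.head? = some ∅)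
    (h₁ : W.getLast? = some S) : (blockWord W).Nodup :=
  Multiset.coe_nodup.mp <| coe_blockWord_of_getLast? h h₀ h₁ ▸ S.nodup

theorem length_blockWord (h : W.IsChain (· ⊆ ·)) (h₀ : W.head? = some ∅)
    (h₁ : W.getLast? = some S) : (blockWord W).length = S.card := by
  simpa using congrArg Multiset.card (coe_blockWord_of_getLast? h h₀ h₁)

theorem toFinset_take_blockWord (h : W.IsChain (· ⊆ ·)) (h₀ : W.head? = some ∅) (hS : S ∈ W) :
    ((blockWord W).take S.card).toFinset = S := by
  obtain ⟨P, R, hW⟩ := List.append_of_mem hS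
  have hprefix := coe_blockWord_of_eq_append hW h h₀
  have hlen : (blockWord (P ++ [S])).length = S.card := by
    simpa using congrArg Multiset.card hprefix
  rw [hW, blockWord_append_cons, List.take_left' hlen, List.toFinset, hprefix,
    Finset.val_toFinset]

theorem getElem?_blockWord (hW : W = P ++ A :: S :: D :: R) (h : W.IsChain (· ⊆ ·))
    (h₀ : W.head? = some ∅) (hSA : (S \ A).Nonempty) (hDS : (D \ S).Nonempty) :
    (blockWord W)[S.card - 1]? = some ((S \ A).max' hSA) ∧
      (blockWord W)[S.card]? = some ((D \ S).min' hDS) := by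
  have hlen : (blockWord (P ++ [A])).length = A.card := by
    simpa using congrArg Multiset.card (coe_blockWord_of_eq_append hW h h₀)
  have hAS : A ⊆ S :=
    (List.isChain_cons_cons.mp ((hW ▸ h).infix (l₁ := [A, S]) ⟨P, D :: R, by simp⟩)).1
  have hword : blockWord W =
      blockWord (P ++ [A]) ++ ((S \ A).sort ++ ((D \ S).sort ++ blockWord (D :: R))) := by
    rw [hW, blockWord_append_cons]
    rfl
  have hcard := Finset.card_sdiff_add_card_eq_card hAS
  have hpos := hSA.card_pos
  have hpos' := hDS.card_pos
  rw [hword, Finset.max'_eq_sorted_last, Finset.min'_eq_sorted_zero]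
  constructor
  · rw [List.getElem?_append_right (by omega), List.getElem?_append_left (by simp; omega),
      List.getElem?_eq_getElem (by simp; omega)]
    congr 2
    simp only [hlen, Finset.length_sort]
    omega
  · rw [List.getElem?_append_right (by omega), List.getElem?_append_right (by simp; omega),
      List.getElem?_append_left (by simp; omega), List.getElem?_eq_getElem (by simp; omega)]
    congr 2
    simp only [hlen, Finset.length_sort]
    omega

end BlockWord

theorem card_mem_Des_permOfWord_blockWord {n : ℕ} {W P R : List (Finset (Fin n))}
    {A S D : Finset (Fin n)} (hW : W = P ++ A :: S :: D :: R) (h : W.IsChain (· ⊆ ·))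
    (h₀ : W.head? = some ∅) (hw : (blockWord W).Nodup) (hlen : (blockWord W).length = n)
    (hface : ∃ a ∈ S \ A, ∃ c ∈ D \ S, c < a) :
    S.card ∈ Des (permOfWord (blockWord W) hw hlen) := by
  obtain ⟨a, ha, c, hc, hca⟩ := hface
  obtain ⟨hmax, hmin⟩ := getElem?_blockWord hW h h₀ ⟨a, ha⟩ ⟨c, hc⟩
  obtain ⟨hS, -⟩ := List.getElem?_eq_some_iff.mp hmin
  have hS₀ : 0 < S.card := Finset.card_pos.mpr ⟨a, (Finset.mem_sdiff.mp ha).1⟩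
  refine ⟨hS.trans_eq hlen, hS₀, ?_⟩
  rw [permOfWord_apply, permOfWord_apply, (List.getElem_eq_iff _).mpr hmax,
    (List.getElem_eq_iff _).mpr hmin]
  calc (D \ S).min' _ ≤ c := Finset.min'_le _ _ hc
    _ < a := hca
    _ ≤ (S \ A).max' _ := Finset.le_max' _ _ ha

section WithSentinels

variable {n : ℕ} {L : List (Finset (Fin n))} {A S D : Finset (Fin n)}

theorem mem_withSent : S ∈ withSent n L ↔ S = ∅ ∨ S ∈ L ∨ S = Finset.univ := by
  simp [withSent]

theorem mem_of_mem_withSent_of_ssubset (hS : S ∈ withSent n L) (hAS : A ⊂ S) (hSD : S ⊂ D) :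
    S ∈ L := by
  rcases mem_withSent.mp hS with rfl | hS | rfl
  · exact absurd hAS (Finset.not_ssubset_empty A)
  · exact hS
  · exact absurd (Finset.subset_univ D) hSD.not_subset

theorem eq_firstK_card_of_mem_withSent {π : Equiv.Perm (Fin n)}
    (hπ : ∀ S ∈ L, S = firstK π S.card) (hS : S ∈ withSent n L) : S = firstK π S.card := by
  rcases mem_withSent.mp hS with rfl | hS | rfl
  · exact (firstK_zero π).symm
  · exact hπ S hS
  · simpa using (firstK_self π).symm

theorem exists_eq_append_of_mem (hS : S ∈ L) :
    ∃ P A D R, withSent n L = P ++ A :: S :: D :: R := by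
  obtain ⟨L₁, L₂, rfl⟩ := List.append_of_mem hS
  obtain ⟨P, A, hPA⟩ : ∃ P A, (∅ : Finset (Fin n)) :: L₁ = P ++ [A] :=
    ⟨_, _, (List.dropLast_append_getLast (List.cons_ne_nil _ _)).symm⟩
  obtain ⟨D, R, hDR⟩ : ∃ D R, L₂ ++ [Finset.univ] = D :: R := by
    cases L₂ <;> simp
  refine ⟨P, A, D, R, ?_⟩
  rw [withSent, ← List.cons_append, hPA, List.append_assoc]
  simp [hDR]

end WithSentinels

theorem descent_chain_iff_face_general (n : ℕ) (L : List (Finset (Fin n)))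
    (hchain : (withSent n L).Chain' (· ⊂ ·)) :
    (∃ π : Equiv.Perm (Fin n), ∀ S ∈ L, S = firstK π S.card ∧ S.card ∈ Des π) ↔
      IsFace n L := by
  simp only [IsFace, hchain, true_and, List.get_eq_getElem]
  rw [List.forall_getElem_three_iff (p := fun A B D => ∃ a ∈ B \ A, ∃ c ∈ D \ B, c < a)]
  constructor
  · rintro ⟨π, hπ⟩ P A B D R hW
    have hmem : ∀ X ∈ [A, B, D], X ∈ withSent n L := by simp [hW]
    have hfirstK X hX := eq_firstK_card_of_mem_withSent (fun S hS => (hπ S hS).1) (hmem X hX)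
    have hABD : [A, B, D].IsChain (· ⊂ ·) := (hW ▸ hchain).infix ⟨P, R, by simp⟩
    obtain ⟨hAB, hBD⟩ : A ⊂ B ∧ B ⊂ D := by simpa using hABD
    have hB := mem_of_mem_withSent_of_ssubset (hmem B (by simp)) hAB hBD
    have := exists_lt_of_mem_Des (Finset.card_lt_card hAB) (Finset.card_lt_card hBD) (hπ B hB).2
    rwa [← hfirstK A (by simp), ← hfirstK B (by simp), ← hfirstK D (by simp)] at this
  · intro hface
    have h : (withSent n L).IsChain (· ⊆ ·) := hchain.imp fun _ _ => subset_of_ssubset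
    have h₀ : (withSent n L).head? = some ∅ := rfl
    have h₁ : (withSent n L).getLast? = some Finset.univ :=
      List.getLast?_eq_some_iff.mpr ⟨_, rfl⟩
    refine ⟨permOfWord _ (nodup_blockWord h h₀ h₁)
      ((length_blockWord h h₀ h₁).trans (Finset.card_fin n)), fun S hS => ⟨?_, ?_⟩⟩
    · rw [firstK_permOfWord, toFinset_take_blockWord h h₀ (mem_withSent.mpr (.inr (.inl hS)))]
    · obtain ⟨P, A, D, R, hW⟩ := exists_eq_append_of_mem hS
      exact card_mem_Des_permOfWord_blockWord hW h h₀ _ _ (hface P A S D R hW)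

/-- for `n ≥ 1`, a strict chain `∅ ⊊ S₁ ⊊ ⋯ ⊊ S_j ⊊ {1,…,n}` is
(part of) the descent chain of some permutation `π ∈ Sₙ` — i.e. each `Sᵢ` is the
image of the first `|Sᵢ|` positions of `π` and `|Sᵢ| ∈ Des π` — if and only if
`max (Sᵢ \ S_{i-1}) > min (S_{i+1} \ Sᵢ)` for all `1 ≤ i ≤ j` (which, together
with the chain hypothesis, is `IsFace n L`). -/
theorem descent_chain_iff_face (n : ℕ) (hn : 1 ≤ n) (L : List (Finset (Fin n)))
    (hchain : (withSent n L).Chain' (· ⊂ ·)) :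
    (∃ π : Equiv.Perm (Fin n), ∀ S ∈ L, S = firstK π S.card ∧ S.card ∈ Des π) ↔
      IsFace n L :=
  descent_chain_iff_face_general n L hchain
end

section
/- For each i ≥ 0, the number of i-dimensional faces of the h-complex Δ_n (chains of i+1 subsets that are descent chains of permutations) equals the Eulerian number A(n, i+1), the number of permutations in S_n with exactly i+1 descents. -/
theorem List.countP_range_lt (k j : ℕ) : (List.range j).countP (· < k) = min k j := by
  induction j with
  | zero => simp
  | succ j ih =>
    rw [List.range_succ, List.countP_append, ih]
    by_cases h : j < k <;> simp [h] <;> omega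

theorem Nat.exists_eq_and_succ_eq_succ_of_succ_le {d : ℕ → ℕ} (hd : ∀ p, d (p + 1) ≤ d p + 1)
    {m N : ℕ} (h0 : d 0 ≤ m) (hN : m < d N) : ∃ p < N, d p = m ∧ d (p + 1) = m + 1 := by
  induction N with
  | zero => omega
  | succ N ih =>
    by_cases h : m < d N
    · obtain ⟨p, hp, hpm⟩ := ih h
      exact ⟨p, by omega, hpm⟩
    · exact ⟨N, N.lt_succ_self, by have := hd N; omega, by have := hd N; omega⟩

theorem Tuple.sort_apply_le_of_le_of_eq {n : ℕ} {α : Type*} [LinearOrder α] {f : Fin n → α}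
    {p q : Fin n} (hpq : p ≤ q) (h : f (Tuple.sort f p) = f (Tuple.sort f q)) :
    Tuple.sort f p ≤ Tuple.sort f q := by
  rcases hpq.lt_or_eq with hpq | rfl
  · exact ((Tuple.eq_sort_iff.1 rfl).2 p q hpq h).le
  · rfl

open Finset Equiv

namespace DescentComplex

variable {n : ℕ} {f : Fin n → ℕ} {j : ℕ}

def level (L : List (Finset (Fin n))) (x : Fin n) : ℕ := L.countP (x ∉ ·)

def sublevels (f : Fin n → ℕ) (j : ℕ) : List (Finset (Fin n)) :=
  (List.range j).map fun m => univ.filter (f · ≤ m)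

lemma level_le_length (L : List (Finset (Fin n))) (x : Fin n) : level L x ≤ L.length :=
  List.countP_le_length

@[simp]
lemma length_sublevels (f : Fin n → ℕ) (j : ℕ) : (sublevels f j).length = j := by
  simp [sublevels]

lemma level_sublevels (hf : ∀ x, f x ≤ j) : level (sublevels f j) = f := by
  funext x
  simp only [level, sublevels, List.countP_map, Function.comp_def, mem_filter, mem_univ, true_and,
    not_le]
  rw [List.countP_range_lt, min_eq_left (hf x)]

lemma mem_getElem_iff_level_le {L : List (Finset (Fin n))} (hL : L.Pairwise (· ⊆ ·)) (x : Fin n)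
    {m : ℕ} (hm : m < L.length) : x ∈ L[m] ↔ level L x ≤ m := by
  induction L generalizing m with
  | nil => simp at hm
  | cons S L ih =>
    rw [List.pairwise_cons] at hL
    by_cases hx : x ∈ S
    · have hall : ∀ T ∈ L, x ∈ T := fun T hT => hL.1 T hT hx
      have h0 : level (S :: L) x = 0 := List.countP_eq_zero.2 (by simpa [hx] using hall)
      rw [h0, iff_true_intro (Nat.zero_le m), iff_true]
      cases m with
      | zero => exact hx
      | succ m => exact hall _ (List.getElem_mem _)
    · cases m with
      | zero => simp [level, hx]
      | succ m => simpa [level, hx] using ih hL.2 (m := m) (by simpa using hm)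

lemma sublevels_level {L : List (Finset (Fin n))} (hL : L.Pairwise (· ⊆ ·)) :
    sublevels (level L) L.length = L :=
  List.ext_getElem (by simp) fun m _ hm => by
    ext x
    simp [sublevels, mem_getElem_iff_level_le hL x hm]

lemma _root_.IsFace.pairwise_subset {L : List (Finset (Fin n))} (h : IsFace n L) :
    L.Pairwise (· ⊆ ·) :=
  ((List.isChain_iff_pairwise.1 h.1).sublist (by simp [withSent])).imp subset_of_ssubset

lemma withSent_sublevels (hf : ∀ x, f x ≤ j) :
    withSent n (sublevels f j) = (List.range (j + 2)).map fun m => univ.filter (f · < m) := by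
  rw [withSent, sublevels, List.range_succ, List.range_succ_eq_map]
  simp [Function.comp_def, hf]

lemma getElem_withSent_sublevels (hf : ∀ x, f x ≤ j) {m : ℕ}
    (hm : m < (withSent n (sublevels f j)).length) :
    (withSent n (sublevels f j))[m] = univ.filter (f · < m) := by
  simp [withSent_sublevels hf]

structure IsDescentLabelling (f : Fin n → ℕ) (j : ℕ) : Prop where
  le : ∀ x, f x ≤ j
  exists_eq : ∀ m ≤ j, ∃ x, f x = m
  exists_lt : ∀ m < j, ∃ a, f a = m ∧ ∃ c, f c = m + 1 ∧ c < a

theorem isFace_sublevels_iff (hf : ∀ x, f x ≤ j) :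
    IsFace n (sublevels f j) ↔ IsDescentLabelling f j := by
  have hsdiff (m : ℕ) (x : Fin n) :
      x ∈ univ.filter (f · < m + 1) \ univ.filter (f · < m) ↔ f x = m := by
    simp only [mem_sdiff, mem_filter, mem_univ, true_and]
    omega
  have hssub (m : ℕ) :
      univ.filter (f · < m) ⊂ univ.filter (f · < m + 1) ↔ ∃ x, f x = m := by
    have hsub : univ.filter (f · < m) ⊆ univ.filter (f · < m + 1) :=
      monotone_filter_right _ fun _ _ => by omega
    rw [ssubset_iff_of_subset hsub]
    exact exists_congr fun x => by simp only [mem_filter, mem_univ, true_and]; omega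
  simp only [IsFace, List.get_eq_getElem, getElem_withSent_sublevels hf, hsdiff]
  rw [withSent_sublevels hf, List.Chain', List.isChain_map, List.isChain_range_succ]
  simp only [hssub, List.length_map, List.length_range]
  constructor
  · rintro ⟨hhit, hdesc⟩
    exact ⟨hf, fun m hm => hhit m (by omega), fun m hm => hdesc m (by omega)⟩
  · rintro ⟨-, hhit, hdesc⟩
    exact ⟨fun m hm => hhit m (by omega), fun m hm => hdesc m (by omega)⟩

theorem _root_.IsFace.isDescentLabelling {L : List (Finset (Fin n))} (h : IsFace n L) :
    IsDescentLabelling (level L) L.length := by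
  rw [← isFace_sublevels_iff (level_le_length L), sublevels_level h.pairwise_subset]
  exact h

instance (π : Perm (Fin n)) : DecidablePred (· ∈ Des π) :=
  fun k => inferInstanceAs (Decidable (∃ _ : k < n, 0 < k ∧ _))

-- `k ∈ Des π` compares the positions `k - 1` and `k`, so this is the index of the ascending run of
-- `π` containing position `p`.
def descentsUpTo (π : Perm (Fin n)) (p : ℕ) : ℕ :=
  ((range (p + 1)).filter (· ∈ Des π)).card

def runIndex (π : Perm (Fin n)) (x : Fin n) : ℕ :=
  descentsUpTo π (π.symm x)

section Descents

variable (π : Perm (Fin n))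

@[simp]
lemma runIndex_apply (p : Fin n) : runIndex π (π p) = descentsUpTo π p := by
  simp [runIndex]

lemma mem_Des_succ_iff {p : ℕ} :
    p + 1 ∈ Des π ↔ ∃ h : p + 1 < n, π ⟨p + 1, h⟩ < π ⟨p, by omega⟩ :=
  ⟨fun ⟨h, _, hlt⟩ => ⟨h, hlt⟩, fun ⟨h, hlt⟩ => ⟨h, p.succ_pos, hlt⟩⟩

lemma descentsUpTo_zero : descentsUpTo π 0 = 0 := by
  simp [descentsUpTo, Des]

lemma descentsUpTo_succ (p : ℕ) :
    descentsUpTo π (p + 1) = descentsUpTo π p + if p + 1 ∈ Des π then 1 else 0 := by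
  rw [descentsUpTo, range_add_one, filter_insert]
  split_ifs
  · rw [card_insert_of_notMem (by simp)]
    rfl
  · rfl

lemma mem_Des_iff_descentsUpTo_succ (p : ℕ) :
    p + 1 ∈ Des π ↔ descentsUpTo π (p + 1) = descentsUpTo π p + 1 := by
  rw [descentsUpTo_succ]
  split_ifs <;> simpa

lemma descentsUpTo_succ_le (p : ℕ) : descentsUpTo π (p + 1) ≤ descentsUpTo π p + 1 := by
  rw [descentsUpTo_succ]
  split_ifs <;> omega

lemma monotone_descentsUpTo : Monotone (descentsUpTo π) :=
  monotone_nat_of_le_succ fun p => by rw [descentsUpTo_succ]; omega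

lemma descentsUpTo_sub_one (hn : 0 < n) : descentsUpTo π (n - 1) = des π := by
  rw [des, descentsUpTo, Nat.sub_add_cancel hn, ← Set.ncard_coe_finset, coe_filter]
  congr 1
  ext k
  refine ⟨fun h => h.2, fun h => ⟨?_, h⟩⟩
  obtain ⟨hk, -⟩ := h
  exact mem_coe.2 (mem_range.2 hk)

lemma pos_of_des_ne_zero (h : des π ≠ 0) : 0 < n := by
  obtain ⟨k, hk, -⟩ := Set.nonempty_of_ncard_ne_zero h
  omega

lemma apply_lt_apply_succ {p : ℕ} (hp : p + 1 < n)
    (h : descentsUpTo π (p + 1) = descentsUpTo π p) : π ⟨p, by omega⟩ < π ⟨p + 1, hp⟩ := by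
  have hasc : ¬ p + 1 ∈ Des π := by rw [mem_Des_iff_descentsUpTo_succ]; omega
  exact (not_lt.1 fun hlt => hasc ⟨hp, p.succ_pos, hlt⟩).lt_of_ne (π.injective.ne (by simp))

lemma apply_lt_apply_of_descentsUpTo_eq {p q : ℕ} (hpq : p < q) (hq : q < n)
    (h : descentsUpTo π p = descentsUpTo π q) : π ⟨p, hpq.trans hq⟩ < π ⟨q, hq⟩ := by
  induction q, hpq using Nat.le_induction with
  | base => exact apply_lt_apply_succ π hq h.symm
  | succ q hpq ih =>
    have hmono := monotone_descentsUpTo π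
    have hq' : descentsUpTo π p = descentsUpTo π q :=
      le_antisymm (hmono (by omega)) (h ▸ hmono q.le_succ)
    exact (ih (by omega) hq').trans (apply_lt_apply_succ π hq (hq' ▸ h).symm)

theorem isDescentLabelling_runIndex (hn : 0 < n) : IsDescentLabelling (runIndex π) (des π) where
  le x := descentsUpTo_sub_one π hn ▸ monotone_descentsUpTo π (Nat.le_sub_one_of_lt (π.symm x).isLt)
  exists_eq m hm := by
    obtain ⟨p, hp, hpm⟩ : ∃ p ≤ n - 1, descentsUpTo π p = m := by
      rcases hm.lt_or_eq with hm | rfl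
      · obtain ⟨p, hp, hpm, -⟩ := Nat.exists_eq_and_succ_eq_succ_of_succ_le
          (descentsUpTo_succ_le π) (by simp [descentsUpTo_zero]) (descentsUpTo_sub_one π hn ▸ hm)
        exact ⟨p, hp.le, hpm⟩
      · exact ⟨n - 1, le_rfl, descentsUpTo_sub_one π hn⟩
    exact ⟨π ⟨p, by omega⟩, by simpa using hpm⟩
  exists_lt m hm := by
    obtain ⟨p, hp, hpm, hpm'⟩ := Nat.exists_eq_and_succ_eq_succ_of_succ_le
      (descentsUpTo_succ_le π) (by simp [descentsUpTo_zero]) (descentsUpTo_sub_one π hn ▸ hm)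
    obtain ⟨h, hlt⟩ := (mem_Des_succ_iff π).1 ((mem_Des_iff_descentsUpTo_succ π p).2 (by omega))
    exact ⟨π ⟨p, by omega⟩, by simpa using hpm, π ⟨p + 1, h⟩, by simpa using hpm', hlt⟩

theorem sort_runIndex : Tuple.sort (runIndex π) = π := by
  refine (Tuple.eq_sort_iff.2 ⟨fun p q hpq => ?_, fun p q hpq h => ?_⟩).symm
  · simpa using monotone_descentsUpTo π hpq
  · simpa using apply_lt_apply_of_descentsUpTo_eq π hpq q.isLt (by simpa using h)

end Descents

namespace IsDescentLabelling

variable (hf : IsDescentLabelling f j)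
include hf

lemma sort_succ_le {p : ℕ} (hp : p + 1 < n) :
    f (Tuple.sort f ⟨p + 1, hp⟩) ≤ f (Tuple.sort f ⟨p, by omega⟩) + 1 := by
  have hmono : Monotone (f ∘ Tuple.sort f) := Tuple.monotone_sort f
  by_contra! hlt
  obtain ⟨x, hx⟩ := hf.exists_eq _ (hlt.trans_le (hf.le _)).le
  have h1 : (⟨p, by omega⟩ : Fin n) < (Tuple.sort f).symm x := hmono.reflect_lt (by simp [hx])
  have h2 : (Tuple.sort f).symm x < ⟨p + 1, hp⟩ := hmono.reflect_lt (by simpa [hx] using hlt)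
  rw [Fin.lt_def] at h1 h2
  dsimp only at h1 h2
  omega

lemma mem_Des_sort_iff {p : ℕ} (hp : p + 1 < n) :
    p + 1 ∈ Des (Tuple.sort f) ↔
      f (Tuple.sort f ⟨p + 1, hp⟩) = f (Tuple.sort f ⟨p, by omega⟩) + 1 := by
  have hmono : Monotone (f ∘ Tuple.sort f) := Tuple.monotone_sort f
  have hpp : (⟨p, by omega⟩ : Fin n) ≤ ⟨p + 1, hp⟩ := Fin.mk_le_mk.2 p.le_succ
  have hle : f (Tuple.sort f ⟨p, by omega⟩) ≤ f (Tuple.sort f ⟨p + 1, hp⟩) := hmono hpp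
  have hsucc := hf.sort_succ_le hp
  rw [mem_Des_succ_iff]
  constructor
  · rintro ⟨_, hdes⟩
    have hne : f (Tuple.sort f ⟨p + 1, hp⟩) ≠ f (Tuple.sort f ⟨p, by omega⟩) := fun h =>
      hdes.not_ge (Tuple.sort_apply_le_of_le_of_eq hpp h.symm)
    omega
  · -- `sort f ⟨p + 1, _⟩` is the least element of its level and `sort f ⟨p, _⟩` the largest of
    -- the level below, so they are separated by the witnesses `c < a` of `exists_lt`.
    intro hjump
    obtain ⟨a, ha, c, hc, hca⟩ := hf.exists_lt _ ((Nat.lt_succ_self _).trans_le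
      (hjump ▸ hf.le (Tuple.sort f ⟨p + 1, hp⟩)))
    have hc' : Tuple.sort f ⟨p + 1, hp⟩ ≤ c := by
      have hlt : (⟨p, by omega⟩ : Fin n) < (Tuple.sort f).symm c :=
        hmono.reflect_lt (by simp [hc])
      have hpos : (⟨p + 1, hp⟩ : Fin n) ≤ (Tuple.sort f).symm c := hlt
      simpa using Tuple.sort_apply_le_of_le_of_eq (f := f) hpos (by simp [hc, hjump])
    have ha' : a ≤ Tuple.sort f ⟨p, by omega⟩ := by
      have hlt : (Tuple.sort f).symm a < ⟨p + 1, hp⟩ :=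
        hmono.reflect_lt (by simp [ha, hjump])
      have hpos : (Tuple.sort f).symm a ≤ ⟨p, by omega⟩ := Nat.lt_succ_iff.1 hlt
      simpa using Tuple.sort_apply_le_of_le_of_eq (f := f) hpos (by simp [ha])
    exact ⟨hp, hc'.trans_lt (hca.trans_le ha')⟩

theorem descentsUpTo_sort (p : ℕ) (hp : p < n) :
    descentsUpTo (Tuple.sort f) p = f (Tuple.sort f ⟨p, hp⟩) := by
  induction p with
  | zero =>
    obtain ⟨x, hx⟩ := hf.exists_eq 0 (Nat.zero_le _)
    have := Tuple.monotone_sort f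
      (Fin.mk_le_of_le_val (Nat.zero_le _) : ⟨0, hp⟩ ≤ (Tuple.sort f).symm x)
    simp only [Function.comp_apply, Equiv.apply_symm_apply, hx] at this
    rw [descentsUpTo_zero]
    omega
  | succ p ih =>
    have hsucc := hf.sort_succ_le hp
    have hle := Tuple.monotone_sort f
      (Fin.mk_le_mk.2 p.le_succ : (⟨p, by omega⟩ : Fin n) ≤ ⟨p + 1, hp⟩)
    simp only [Function.comp_apply] at hle
    rw [descentsUpTo_succ, ih (by omega)]
    split_ifs with h <;> rw [hf.mem_Des_sort_iff hp] at h <;> omega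

theorem runIndex_sort : runIndex (Tuple.sort f) = f := by
  funext x
  rw [runIndex, hf.descentsUpTo_sort _ ((Tuple.sort f).symm x).isLt]
  simp

theorem des_sort : des (Tuple.sort f) = j := by
  obtain ⟨x, hx⟩ := hf.exists_eq j le_rfl
  have hn : 0 < n := x.pos
  rw [← descentsUpTo_sub_one _ hn, hf.descentsUpTo_sort _ (by omega)]
  refine le_antisymm (hf.le _) ?_
  have := Tuple.monotone_sort f
    (Fin.le_def.2 (Nat.le_sub_one_of_lt ((Tuple.sort f).symm x).isLt) :
      (Tuple.sort f).symm x ≤ ⟨n - 1, by omega⟩)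
  simpa [hx] using this

end IsDescentLabelling

end DescentComplex

open DescentComplex

/-- the number of `i`-dimensional faces of `Δₙ` (chains of `i+1`
subsets satisfying the face condition) equals the Eulerian number `A(n, i+1)`,
the number of permutations of `Sₙ` with exactly `i+1` descents. -/
theorem card_faces_eq_eulerian (n i : ℕ) :
    Nat.card {L : List (Finset (Fin n)) // IsFace n L ∧ L.length = i + 1} =
      Nat.card {π : Equiv.Perm (Fin n) // des π = i + 1} := by
  have hlab (π : {π : Equiv.Perm (Fin n) // des π = i + 1}) :
      IsDescentLabelling (runIndex π.1) (des π.1) :=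
    isDescentLabelling_runIndex π.1 (pos_of_des_ne_zero π.1 (π.2.trans_ne i.succ_ne_zero))
  refine Nat.card_congr
    { toFun := fun L => ⟨Tuple.sort (level L.1), by rw [L.2.1.isDescentLabelling.des_sort, L.2.2]⟩
      invFun := fun π => ⟨sublevels (runIndex π.1) (des π.1),
        (isFace_sublevels_iff (hlab π).le).2 (hlab π), by rw [length_sublevels, π.2]⟩
      left_inv := fun L => Subtype.ext ?_
      right_inv := fun π => Subtype.ext ?_ }
  · have hL := L.2.1.isDescentLabelling
    dsimp only
    rw [hL.runIndex_sort, hL.des_sort, sublevels_level L.2.1.pairwise_subset]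
  · dsimp only
    rw [level_sublevels (hlab π).le, sort_runIndex]
end

section
/- Let n = 3k+4 for k ≥ 0. The chain of subsets S_1 ⊂ S_2 ⊂ ⋯ ⊂ S_{k+1} of {1,…,n}, where S_i is the union of the first i blocks of the ordered block decomposition 1,3 | 2,4,6 | 5,7,9 | ⋯ | 3k−1, 3k+1, 3k+3 | 3k+2, 3k+4, is a maximal face of the h-complex Δ_n of dimension k. -/
section Descending

variable {α : Type*} [DecidableEq α] [LT α]

def Descends (A B C : Finset α) : Prop := ∃ a ∈ B \ A, ∃ c ∈ C \ B, c < a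

theorem Descends.mono {A A' B C C' : Finset α} (h : Descends A B C) (hA : A' ⊆ A) (hC : C ⊆ C') :
    Descends A' B C' := by
  obtain ⟨a, ha, c, hc, hca⟩ := h
  rw [Finset.mem_sdiff] at ha hc
  exact ⟨a, Finset.mem_sdiff.2 ⟨ha.1, fun h => ha.2 (hA h)⟩,
    c, Finset.mem_sdiff.2 ⟨hC hc.1, hc.2⟩, hca⟩

def Descending : List (Finset α) → Prop
  | A :: B :: C :: l => Descends A B C ∧ Descending (B :: C :: l)
  | _ => True

theorem Descending.of_cons {A : Finset α} {l : List (Finset α)} (h : Descending (A :: l)) :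
    Descending l := by
  match l, h with
  | [], _ | [_], _ => trivial
  | _ :: _ :: _, h => exact h.2

theorem Descending.of_append_right {l₁ l₂ : List (Finset α)} (h : Descending (l₁ ++ l₂)) :
    Descending l₂ := by
  induction l₁ with
  | nil => exact h
  | cons A l₁ ih => exact ih h.of_cons

theorem Descending.descends {l₁ l₂ : List (Finset α)} {A B C : Finset α}
    (h : Descending (l₁ ++ A :: B :: C :: l₂)) : Descends A B C :=
  h.of_append_right.1

theorem descending_iff_getElem : ∀ l : List (Finset α), Descending l ↔
    ∀ i (h : i + 2 < l.length), Descends l[i] l[i + 1] l[i + 2]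
  | [] | [_] | [_, _] => by simp [Descending]
  | A :: B :: C :: l => by
    rw [Descending, descending_iff_getElem (B :: C :: l)]
    constructor
    · rintro ⟨h₀, h⟩ (_ | i) hi
      · exact h₀
      · exact h i (by simp at hi ⊢; omega)
    · intro h
      exact ⟨h 0 (by simp), fun i hi => h (i + 1) (by simp at hi ⊢; omega)⟩

theorem Descending.erase : ∀ {l₁ l₂ : List (Finset α)} {T : Finset α},
    (l₁ ++ T :: l₂).IsChain (· ⊆ ·) → Descending (l₁ ++ T :: l₂) → Descending (l₁ ++ l₂)
  | [], _, _, _, h => h.of_cons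
  | [_], [], _, _, _ | [_], [_], _, _, _ | [_, _], [], _, _, _ => trivial
  | [_], _ :: _ :: _, _, hc, h => ⟨h.2.1.mono (List.isChain_cons_cons.1 hc).1 subset_rfl, h.2.2⟩
  | [P, Q], _ :: _, _, hc, h =>
    ⟨h.1.mono subset_rfl (List.isChain_append_cons_cons (l₁ := [P, Q]).1 hc).2.1,
      Descending.erase (l₁ := [Q]) (List.isChain_cons_cons.1 hc).2 h.2⟩
  | _ :: Q :: R :: l₁, _, _, hc, h =>
    ⟨h.1, Descending.erase (l₁ := Q :: R :: l₁) (List.isChain_cons_cons.1 hc).2 h.2⟩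

end Descending

section Face

variable {n : ℕ}

theorem isFace_iff_descending {L : List (Finset (Fin n))} :
    IsFace n L ↔ (withSent n L).IsChain (· ⊂ ·) ∧ Descending (withSent n L) := by
  rw [IsFace, descending_iff_getElem]
  rfl

theorem withSent_append_cons (A B : List (Finset (Fin n))) (T : Finset (Fin n)) :
    withSent n (A ++ T :: B) = (∅ :: A) ++ T :: (B ++ [Finset.univ]) := by
  simp [withSent]

theorem IsFace.erase {A B : List (Finset (Fin n))} {T : Finset (Fin n)}
    (h : IsFace n (A ++ T :: B)) : IsFace n (A ++ B) := by
  rw [isFace_iff_descending, withSent_append_cons] at h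
  have hsub : (withSent n (A ++ B)).Sublist ((∅ :: A) ++ T :: (B ++ [Finset.univ])) := by
    simp [withSent]
  refine isFace_iff_descending.2 ⟨h.1.sublist hsub, ?_⟩
  simpa [withSent] using h.2.erase (h.1.imp fun _ _ => subset_of_ssubset)

theorem List.Sublist.exists_eq_append_cons {α : Type*} {l₁ l₂ : List α} (h : l₁.Sublist l₂)
    (hl : l₁.length < l₂.length) : ∃ A T B, l₂ = A ++ T :: B ∧ l₁.Sublist (A ++ B) := by
  induction h with
  | slnil => simp at hl
  | cons T h => exact ⟨[], T, _, rfl, h⟩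
  | cons_cons a _ ih =>
    obtain ⟨A, T, B, rfl, h⟩ := ih (by simpa using hl)
    exact ⟨a :: A, T, B, rfl, h.cons_cons a⟩

theorem eq_of_isFace_of_sublist {L : List (Finset (Fin n))}
    (hL : ∀ A B T, A ++ B = L → ¬ IsFace n (A ++ T :: B)) :
    ∀ {L'}, IsFace n L' → L.Sublist L' → L' = L
  | L', hL', hsub => by
    obtain hlen | hlt := hsub.length_le.eq_or_lt
    · exact (hsub.eq_of_length hlen).symm
    obtain ⟨A, T, B, rfl, hsub'⟩ := hsub.exists_eq_append_cons hlt
    have hAB : A ++ B = L := eq_of_isFace_of_sublist hL hL'.erase hsub'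
    exact absurd hL' (hL A B T hAB)
termination_by L' => L'.length

end Face

section Blocks

/-- `S_p`, the union of the first `p` blocks, with `x : Fin n` standing for the number `x + 1`.
The formula also yields the sentinels `S₀ = ∅` and, for `n = 3k + 4`, `S_{k+2} = univ`. -/
def blockUnion (n p : ℕ) : Finset (Fin n) :=
  Finset.univ.filter fun x => (x : ℕ) + 3 ≤ 3 * p ∨ (x : ℕ) + 1 = 3 * p

variable {n : ℕ}

@[simp]
theorem mem_blockUnion {p : ℕ} {x : Fin n} :
    x ∈ blockUnion n p ↔ (x : ℕ) + 3 ≤ 3 * p ∨ (x : ℕ) + 1 = 3 * p := by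
  simp [blockUnion]

theorem blockUnion_ssubset_succ {p : ℕ} (hp : 3 * p < n) :
    blockUnion n p ⊂ blockUnion n (p + 1) := by
  refine Finset.ssubset_iff_of_subset (fun x => by simp only [mem_blockUnion]; omega) |>.2
    ⟨⟨3 * p, hp⟩, ?_⟩
  simp only [mem_blockUnion]
  omega

theorem descends_blockUnion {p : ℕ} (hp : 3 * p + 2 < n) :
    Descends (blockUnion n p) (blockUnion n (p + 1)) (blockUnion n (p + 2)) :=
  ⟨⟨3 * p + 2, hp⟩, by simp only [Finset.mem_sdiff, mem_blockUnion]; omega,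
    ⟨3 * p + 1, by omega⟩, by simp only [Finset.mem_sdiff, mem_blockUnion]; omega,
    Fin.mk_lt_mk.2 (by omega)⟩

theorem withSent_eq_ofFn_blockUnion (k : ℕ) :
    withSent (3 * k + 4) (List.ofFn fun i : Fin (k + 1) =>
      Finset.univ.filter fun x : Fin (3 * k + 4) =>
        (x : ℕ) ≤ 3 * (i : ℕ) ∨ (x : ℕ) = 3 * (i : ℕ) + 2) =
      List.ofFn fun p : Fin (k + 3) => blockUnion (3 * k + 4) p := by
  conv_rhs => rw [List.ofFn_succ, List.ofFn_succ']
  simp only [withSent, List.concat_eq_append, List.cons_append]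
  congr 2
  · ext x
    simp
  · congr 1
    funext i
    ext x
    simp only [Finset.mem_filter, Finset.mem_univ, true_and, mem_blockUnion, Fin.val_castSucc,
      Fin.val_succ]
    omega
  · rw [List.singleton_inj]
    ext x
    simp only [Finset.mem_univ, mem_blockUnion, Fin.val_succ, Fin.val_last, true_iff]
    omega

theorem isFace_of_withSent_eq_blockUnion {k : ℕ} {L : List (Finset (Fin (3 * k + 4)))}
    (hX : withSent (3 * k + 4) L = List.ofFn fun p : Fin (k + 3) => blockUnion (3 * k + 4) p) :
    IsFace (3 * k + 4) L := by
  rw [isFace_iff_descending, hX, List.isChain_ofFn, descending_iff_getElem]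
  refine ⟨fun i hi => blockUnion_ssubset_succ (p := i) (by omega), fun i hi => ?_⟩
  simp only [List.getElem_ofFn]
  exact descends_blockUnion (p := i) (by simp at hi; omega)

theorem exists_mem_of_descends_blockUnion {A T : Finset (Fin n)} {p : ℕ}
    (h : Descends A (blockUnion n p) T) : ∃ c ∈ T, (c : ℕ) + 2 = 3 * p := by
  obtain ⟨a, ha, c, hc, hca⟩ := h
  simp only [Finset.mem_sdiff, mem_blockUnion] at ha hc
  exact ⟨c, hc.1, by rw [Fin.lt_def] at hca; omega⟩

theorem exists_notMem_of_blockUnion_descends {T C : Finset (Fin n)} {p : ℕ}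
    (h : Descends T (blockUnion n p) C) : ∃ a ∉ T, (a : ℕ) + 1 = 3 * p := by
  obtain ⟨a, ha, c, hc, hca⟩ := h
  simp only [Finset.mem_sdiff, mem_blockUnion] at ha hc
  exact ⟨a, ha.2, by rw [Fin.lt_def] at hca; omega⟩

theorem false_of_blockUnion_insert {k p : ℕ} {T : Finset (Fin (3 * k + 4))}
    (hUT : blockUnion _ p ⊆ T) (hTV : T ⊆ blockUnion _ (p + 1))
    (hmid : Descends (blockUnion _ p) T (blockUnion _ (p + 1)))
    (hlow : p ≠ 0 → Descends ∅ (blockUnion _ p) T)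
    (hup : p ≤ k → Descends T (blockUnion _ (p + 1)) Finset.univ) : False := by
  have val_ne {x y : Fin (3 * k + 4)} (hx : x ∈ T) (hy : y ∉ T) : (x : ℕ) ≠ y :=
    fun h => hy (Fin.ext h ▸ hx)
  obtain ⟨a, ha, c, hc, hca⟩ := hmid
  have haV := hTV (Finset.mem_sdiff.1 ha).1
  have hcU : c ∉ blockUnion _ p := fun h => (Finset.mem_sdiff.1 hc).2 (hUT h)
  simp only [Finset.mem_sdiff, mem_blockUnion] at ha hc haV hcU
  rw [Fin.lt_def] at hca
  rcases Nat.eq_zero_or_pos p with rfl | hp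
  · obtain ⟨a', ha', ha'v⟩ := exists_notMem_of_blockUnion_descends (hup (Nat.zero_le k))
    have := val_ne ha.1 ha'
    omega
  · obtain ⟨c', hc', hc'v⟩ := exists_mem_of_descends_blockUnion (hlow hp.ne')
    have := val_ne hc' hc.2
    by_cases hpk : p ≤ k
    · obtain ⟨a', ha', ha'v⟩ := exists_notMem_of_blockUnion_descends (hup hpk)
      have := val_ne ha.1 ha'
      omega
    · have := a.isLt
      omega

theorem not_isFace_insert_of_withSent_eq_blockUnion {k : ℕ}
    {L A B : List (Finset (Fin (3 * k + 4)))} {T : Finset (Fin (3 * k + 4))}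
    (hX : withSent (3 * k + 4) L = List.ofFn fun p : Fin (k + 3) => blockUnion (3 * k + 4) p)
    (hAB : A ++ B = L) : ¬ IsFace (3 * k + 4) (A ++ T :: B) := by
  rw [isFace_iff_descending, withSent_append_cons]
  rintro ⟨hchain, hdesc⟩
  obtain ⟨P, U, hP⟩ : ∃ P U, ∅ :: A = P ++ [U] :=
    ⟨_, _, (List.dropLast_append_getLast (List.cons_ne_nil _ _)).symm⟩
  obtain ⟨V, Q, hQ⟩ : ∃ V Q, B ++ [Finset.univ] = V :: Q := by
    cases B with
    | nil => exact ⟨_, _, rfl⟩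
    | cons B₀ B => exact ⟨B₀, B ++ [Finset.univ], rfl⟩
  have hPQ : P ++ U :: V :: Q = List.ofFn fun p : Fin (k + 3) => blockUnion (3 * k + 4) p := by
    rw [← hX, ← hAB]
    simpa [withSent, hQ] using congrArg (· ++ V :: Q) hP.symm
  rw [hP, hQ] at hchain hdesc
  simp only [List.append_assoc, List.singleton_append] at hchain hdesc
  have hlen : P.length + Q.length = k + 1 := by
    have := congrArg List.length hPQ
    simp only [List.length_append, List.length_cons, List.length_ofFn] at this
    omega
  obtain ⟨-, hUT, hTVQ⟩ := List.isChain_append_cons_cons.1 hchain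
  have hlow (hP : P ≠ []) : Descends ∅ U T := by
    obtain ⟨P, W, rfl⟩ := (List.eq_nil_or_concat P).resolve_left hP
    have : Descending (P ++ W :: U :: T :: V :: Q) := by simpa using hdesc
    exact this.descends.mono (Finset.empty_subset _) subset_rfl
  have hup (hQ : Q ≠ []) : Descends T V Finset.univ := by
    obtain ⟨Y, Q, rfl⟩ := List.exists_cons_of_ne_nil hQ
    have : Descending ((P ++ [U]) ++ T :: V :: Y :: Q) := by simpa using hdesc
    exact this.descends.mono subset_rfl (Finset.subset_univ _)
  have hget (i : ℕ) (hi : i < k + 3) : (P ++ U :: V :: Q)[i]? = some (blockUnion _ i) := by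
    rw [hPQ, List.getElem?_ofFn, dif_pos hi]
  obtain rfl : U = blockUnion _ P.length := by simpa using hget P.length (by omega)
  obtain rfl : V = blockUnion _ (P.length + 1) := by simpa using hget (P.length + 1) (by omega)
  exact false_of_blockUnion_insert hUT.subset (List.isChain_cons_cons.1 hTVQ).1.subset
    hdesc.descends (fun hp => hlow (by rintro rfl; exact hp rfl))
    (fun hpk => hup (by rintro rfl; simp at hlen; omega))

end Blocks

/-- for `n = 3k+4`, the chain `S₁ ⊂ ⋯ ⊂ S_{k+1}` of partial unions
of the blocks `1,3 | 2,4,6 | 5,7,9 | ⋯ | 3k-1,3k+1,3k+3 | 3k+2,3k+4` is a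
maximal face of `Δₙ` of dimension `k`.  Here `Sᵢ = {1,…,3i-2} ∪ {3i}`, which in
the 0-indexed `Fin n` encoding of `{1,…,n}` (value `x` standing for the number
`x+1`, index `i : Fin (k+1)` for the 1-indexed block `i+1`) reads
`x ≤ 3i ∨ x = 3i+2`. -/
theorem maximal_face_n_eq_3k4 (k : ℕ) (L : List (Finset (Fin (3 * k + 4))))
    (hL : L = List.ofFn fun i : Fin (k + 1) =>
      Finset.univ.filter fun x : Fin (3 * k + 4) =>
        (x : ℕ) ≤ 3 * (i : ℕ) ∨ (x : ℕ) = 3 * (i : ℕ) + 2) :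
    IsFace (3 * k + 4) L ∧ L.length = k + 1 ∧
      ∀ L', IsFace (3 * k + 4) L' → L.Sublist L' → L' = L := by
  have hX := withSent_eq_ofFn_blockUnion k
  rw [← hL] at hX
  exact ⟨isFace_of_withSent_eq_blockUnion hX, by simp [hL],
    fun _ => eq_of_isFace_of_sublist fun _ _ _ => not_isFace_insert_of_withSent_eq_blockUnion hX⟩
end

section
/- (0-1 Sorting Lemma) Let a comparison-exchange network be a finite list of pairs (p_1,q_1),…,(p_m,q_m) of positions in {1,…,n} with p_t < q_t, applied to a sequence x : {1,…,n} → α (α a linear order) by, at each step t in order, swapping x(p_t) and x(q_t) if x(p_t) > x(q_t). If the network sorts every sequence with values in {0,1} into nondecreasing order, then it sorts every sequence with values in any linear order into nondecreasing order. -/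
/-- One comparison-exchange step: compare positions `pq.1 < pq.2` and swap the
values if they are out of order. -/
def cswap {n : ℕ} {α : Type*} [LinearOrder α] (pq : Fin n × Fin n) (x : Fin n → α) :
    Fin n → α :=
  if x pq.2 < x pq.1 then
    fun i => if i = pq.1 then x pq.2 else if i = pq.2 then x pq.1 else x i
  else x

/-- Run an oblivious comparison-exchange network (a fixed list of comparisons,
performed in order) on an input sequence. -/
def runNet {n : ℕ} {α : Type*} [LinearOrder α] (net : List (Fin n × Fin n))
    (x : Fin n → α) : Fin n → α :=
  net.foldl (fun y pq => cswap pq y) x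

lemma cswap_comp {n : ℕ} {α β : Type*} [LinearOrder α] [LinearOrder β]
    {f : α → β} (hf : Monotone f) (pq : Fin n × Fin n) (x : Fin n → α) :
    f ∘ cswap pq x = cswap pq (f ∘ x) := by
  unfold cswap
  by_cases h : x pq.2 < x pq.1
  · by_cases h2 : f (x pq.2) < f (x pq.1)
    · simp only [h, h2, if_true, Function.comp]
      funext i; simp only [Function.comp_apply]; split_ifs <;> rfl
    · have he : f (x pq.2) = f (x pq.1) := le_antisymm (hf h.le) (not_lt.1 h2)
      simp only [h, h2, if_true, if_false, Function.comp]
      funext i; simp only [Function.comp_apply]; split_ifs with h1 h2 <;> simp_all [he]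
  · have : ¬ f (x pq.2) < f (x pq.1) := not_lt.2 (hf (not_lt.1 h))
    simp [h, this]

lemma runNet_comp {n : ℕ} {α β : Type*} [LinearOrder α] [LinearOrder β]
    {f : α → β} (hf : Monotone f) (net : List (Fin n × Fin n)) (x : Fin n → α) :
    f ∘ runNet net x = runNet net (f ∘ x) := by
  induction net generalizing x with
  | nil => rfl
  | cons pq t ih =>
    simp only [runNet, List.foldl_cons]
    rw [show (List.foldl (fun y pq => cswap pq y) (cswap pq x) t) = runNet t (cswap pq x) from rfl,
      ih, cswap_comp hf]
    rfl

/-- 0-1 Sorting Lemma: if a comparison-exchange network (with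
comparisons `p < q` of positions) sorts every `{0,1}`-valued sequence into
nondecreasing order, then it sorts every sequence with values in an arbitrary
linear order. -/
theorem zero_one_sorting_lemma {n : ℕ} (net : List (Fin n × Fin n))
    (hpq : ∀ pq ∈ net, pq.1 < pq.2)
    (h01 : ∀ x : Fin n → Bool, Monotone (runNet net x)) :
    ∀ {α : Type*} [LinearOrder α], ∀ x : Fin n → α, Monotone (runNet net x) := by
  intro α _ x
  by_contra hmon
  simp only [Monotone, not_forall] at hmon
  obtain ⟨i, j, hij, hlt⟩ := hmon
  set y := runNet net x with hy
  replace hlt : y j < y i := not_le.1 hlt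
  set f : α → Bool := fun a => decide (y j < a) with hf
  have hfm : Monotone f := by
    intro a b hab
    by_cases ha : y j < a
    · simp [f, ha, lt_of_lt_of_le ha hab]
    · simp [f, ha]
  have key : f ∘ y = runNet net (f ∘ x) := by rw [hy, runNet_comp hfm]
  have := (h01 (f ∘ x)) hij
  rw [← key] at this
  simp only [Function.comp, f] at this
  simp [hlt] at this
  exact absurd this (by decide)
end

section
/- (Cluster Lemma) Let Δ be a finite regular CW complex whose cells are partitioned into collections Δ_σ indexed by the elements σ of a finite poset P with unique minimal element, such that for each σ ∈ P the union ⋃_{τ ≤ σ} Δ_τ is a subcomplex of Δ. If for each σ ∈ P one has an acyclic matching M_σ on the cells of Δ_σ (ordered by the face relation of Δ), then the union ⋃_{σ∈P} M_σ is an acyclic matching on the face poset of Δ. -/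
/-- `R` is a matching along the covering (Hasse) relation `E` of a cell/face
poset: each pair `R a b` is a Hasse edge `E a b` (read: `a` is a codimension-one
face of `b`), and the pairs are disjoint (each cell is in at most one pair, in
either role). -/
def IsMatching {Q : Type*} (E R : Q → Q → Prop) : Prop :=
  (∀ a b, R a b → E a b) ∧
  ∀ a b, R a b →
    (∀ c, R a c → c = b) ∧ (∀ c, R c b → c = a) ∧ (∀ c, ¬ R b c) ∧ (∀ c, ¬ R c a)

/-- One step of the directed graph of a matching `R` on the Hasse diagram `E`:
matched edges are oriented upward, all other Hasse edges downward. -/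
def MStep {Q : Type*} (E R : Q → Q → Prop) (x y : Q) : Prop :=
  R x y ∨ (E y x ∧ ¬ R y x)

/-- A matching is acyclic if the directed graph with matched edges up and the
remaining Hasse edges down has no directed cycle. -/
def IsAcyclicMatching {Q : Type*} (E R : Q → Q → Prop) : Prop :=
  IsMatching E R ∧ ∀ x, ¬ Relation.TransGen (MStep E R) x x

/-!
Every step of the matching digraph of `⋃ M σ` weakly lowers the cluster index `g`: matched
edges stay inside one cluster, and unmatched Hasse edges point down, where `g` is monotone.
Hence a directed cycle lies in a single cluster `Δ_σ`, where its steps are steps of the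
matching digraph of `M σ`, contradicting the acyclicity of `M σ`.
-/

namespace Relation.TransGen

variable {α β : Type*} {r : α → α → Prop} {f : α → β} {a b : α}

theorem apply_le_of_step [Preorder β] (hr : ∀ x y, r x y → f y ≤ f x) (h : TransGen r a b) :
    f b ≤ f a := by
  induction h with
  | single h => exact hr _ _ h
  | tail _ h ih => exact (hr _ _ h).trans ih

theorem restrict_fiber [PartialOrder β] (hr : ∀ x y, r x y → f y ≤ f x) (h : TransGen r a b)
    (hab : f a = f b) :
    TransGen (fun x y => r x y ∧ f x = f b ∧ f y = f b) a b := by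
  induction h using head_induction_on with
  | single h => exact single ⟨h, hab, rfl⟩
  | @head a c hac hcb ih =>
    have hc : f c = f b := le_antisymm (hab ▸ hr _ _ hac) (hcb.apply_le_of_step hr)
    exact head ⟨hac, hab, hc⟩ (ih hc)

end Relation.TransGen

section Clusters

variable {Q P : Type*} {E : Q → Q → Prop} {g : Q → P} {M : P → Q → Q → Prop}

theorem isMatching_exists_of_fibers (hfib : ∀ σ a b, M σ a b → g a = σ ∧ g b = σ)
    (hM : ∀ σ, IsMatching (fun a b => E a b ∧ g a = σ ∧ g b = σ) (M σ)) :
    IsMatching E (fun a b => ∃ σ, M σ a b) := by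
  refine ⟨fun a b ⟨σ, h⟩ => ((hM σ).1 a b h).1, fun a b ⟨σ, h⟩ => ?_⟩
  obtain ⟨hga, hgb⟩ := hfib σ a b h
  obtain ⟨h₁, h₂, h₃, h₄⟩ := (hM σ).2 a b h
  refine ⟨fun c ⟨τ, hc⟩ => ?_, fun c ⟨τ, hc⟩ => ?_,
    fun c ⟨τ, hc⟩ => ?_, fun c ⟨τ, hc⟩ => ?_⟩
  · obtain rfl : τ = σ := (hfib τ a c hc).1.symm.trans hga
    exact h₁ c hc
  · obtain rfl : τ = σ := (hfib τ c b hc).2.symm.trans hgb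
    exact h₂ c hc
  · obtain rfl : τ = σ := (hfib τ b c hc).1.symm.trans hgb
    exact h₃ c hc
  · obtain rfl : τ = σ := (hfib τ c a hc).2.symm.trans hga
    exact h₄ c hc

theorem MStep.apply_le_of_fibers [Preorder P] (hg : ∀ a b, E a b → g a ≤ g b)
    (hfib : ∀ σ a b, M σ a b → g a = σ ∧ g b = σ) {a b : Q}
    (h : MStep E (fun a b => ∃ σ, M σ a b) a b) : g b ≤ g a := by
  rcases h with ⟨σ, hM⟩ | ⟨hE, -⟩
  · rw [(hfib σ a b hM).1, (hfib σ a b hM).2]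
  · exact hg b a hE

theorem MStep.fiber (hfib : ∀ σ a b, M σ a b → g a = σ ∧ g b = σ) {σ : P} {a b : Q}
    (ha : g a = σ) (hb : g b = σ) (h : MStep E (fun a b => ∃ σ, M σ a b) a b) :
    MStep (fun a b => E a b ∧ g a = σ ∧ g b = σ) (M σ) a b := by
  rcases h with ⟨τ, hM⟩ | ⟨hE, hn⟩
  · obtain rfl : τ = σ := (hfib τ a b hM).1.symm.trans ha
    exact Or.inl hM
  · exact Or.inr ⟨⟨hE, hb, ha⟩, fun hM => hn ⟨σ, hM⟩⟩

end Clusters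

theorem cluster_lemma_general {Q P : Type*} [PartialOrder P]
    (E : Q → Q → Prop)
    (g : Q → P) (hg : ∀ a b, E a b → g a ≤ g b)
    (M : P → Q → Q → Prop)
    (hfib : ∀ σ a b, M σ a b → g a = σ ∧ g b = σ)
    (hac : ∀ σ : P,
      IsAcyclicMatching (fun a b => E a b ∧ g a = σ ∧ g b = σ) (M σ)) :
    IsAcyclicMatching E (fun a b => ∃ σ, M σ a b) := by
  refine ⟨isMatching_exists_of_fibers hfib fun σ => (hac σ).1, fun x hx => ?_⟩
  have hcluster := hx.restrict_fiber (fun _ _ h => h.apply_le_of_fibers hg hfib) rfl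
  exact (hac (g x)).2 x <|
    Relation.TransGen.mono (fun _ _ ⟨h, ha, hb⟩ => MStep.fiber hfib ha hb h) _ _ hcluster

/-- Cluster Lemma: let `Q` be the set of cells of a finite
regular CW complex, with `E a b` the face-poset covering relation ("`a` is a
face of `b` of one dimension lower", witnessed by the grading `dim`), and let
the cells be partitioned by `g : Q → P` over a finite poset `P` with a unique
minimal element so that `⋃_{τ ≤ σ} Δ_τ` is a subcomplex for each `σ`
(equivalently, `g` is monotone along Hasse edges).  If `M σ` is an acyclic
matching on the cells of the fiber `Δ_σ = g⁻¹(σ)` (with the Hasse relation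
restricted to that fiber), then the union `⋃_σ M σ` is an acyclic matching on
the face poset of the whole complex. -/
theorem cluster_lemma {Q P : Type*} [Finite Q] [Finite P] [PartialOrder P] [OrderBot P]
    (E : Q → Q → Prop) (dim : Q → ℕ)
    (hdim : ∀ a b, E a b → dim a + 1 = dim b)
    (g : Q → P) (hg : ∀ a b, E a b → g a ≤ g b)
    (M : P → Q → Q → Prop)
    (hfib : ∀ σ a b, M σ a b → g a = σ ∧ g b = σ)
    (hac : ∀ σ : P,
      IsAcyclicMatching (fun a b => E a b ∧ g a = σ ∧ g b = σ) (M σ)) :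
    IsAcyclicMatching E (fun a b => ∃ σ, M σ a b) :=
  cluster_lemma_general E g hg M hfib hac
end
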